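/- Define R(y) = μ_p·E[(K_p − y·S̃)⁺] + μ_c·E[(y·S̃ − K_c)⁺] for y > 0, where S̃ = S₀·exp(rT − σ²T/2 + σ√T·Z), Z standard normal. Then R is differentiable at y = 1 with R'(1) = e^{rT}·S₀·(μ_p(Φ(d_p) − 1) + μ_c·Φ(d_c)). In particular R'(1) = 0 if and only if μ_c/μ_p = (1 − Φ(d_p))/Φ(d_c). -/

import Mathlib

/-!
Write the scaled price as `y S̃ = y F exp (b Z - b² / 2)` with forward `F = S₀ e^{rT}` and
`b = σ √T`. The Esscher identity `exp (b z - b² / 2) φ(z) = φ(z - b)` turns the call expectation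
into Black's formula `F Φ(d₁) - K Φ(d₁ - b)`, and put–call parity `(K - x)⁺ = (x - K)⁺ - x + K`
gives the put. So `R` is a combination of Black prices at forward `y F`, and in the derivative of
Black's formula in `F` the two terms coming from `∂d₁/∂F` cancel, because `F φ(d₁) = K φ(d₁ - b)`;
what is left is the delta `Φ(d₁)`, and `d₁` at forward `S₀ e^{rT}` is `dBS`.
-/

open MeasureTheory ProbabilityTheory Real Set

/-- Standard normal CDF. -/
noncomputable def Phi (x : ℝ) : ℝ :=
  ∫ y in Set.Iic x, (Real.sqrt (2 * Real.pi))⁻¹ * Real.exp (-(y ^ 2) / 2)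

/-- Standard normal density. -/
noncomputable def phi (y : ℝ) : ℝ := (Real.sqrt (2 * Real.pi))⁻¹ * Real.exp (-(y ^ 2) / 2)

/-- Black-Scholes d value. -/
noncomputable def dBS (S₀ K r T σ : ℝ) : ℝ :=
  (Real.log (S₀ / K) + T * (r + σ ^ 2 / 2)) / (σ * Real.sqrt T)

/-- Black-Scholes call price (closed form). -/
noncomputable def callBS (S₀ K r T σ : ℝ) : ℝ :=
  S₀ * Phi (dBS S₀ K r T σ) - K * Real.exp (-(r * T)) * Phi (dBS S₀ K r T σ - σ * Real.sqrt T)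

/-- Black-Scholes put price (via put-call parity). -/
noncomputable def putBS (S₀ K r T σ : ℝ) : ℝ :=
  callBS S₀ K r T σ - S₀ + K * Real.exp (-(r * T))

open Filter Topology

lemma phi_pos (x : ℝ) : 0 < phi x := by
  unfold phi; positivity

lemma phi_neg (x : ℝ) : phi (-x) = phi x := by
  simp only [phi, neg_sq]

lemma continuous_phi : Continuous phi := by
  unfold phi; fun_prop

lemma integrable_phi : Integrable phi := by
  have h : phi = fun x => (Real.sqrt (2 * Real.pi))⁻¹ * Real.exp (-(1 / 2) * x ^ 2) := by
    funext x; simp only [phi]; ring_nf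
  rw [h]
  exact (integrable_exp_neg_mul_sq (by norm_num)).const_mul _

lemma Phi_eq_setIntegral_phi (x : ℝ) : Phi x = ∫ z in Iic x, phi z := rfl

lemma Phi_pos (x : ℝ) : 0 < Phi x := by
  rw [Phi_eq_setIntegral_phi, setIntegral_pos_iff_support_of_nonneg_ae
    (ae_of_all _ fun z => (phi_pos z).le) integrable_phi.integrableOn,
    Function.support_eq_univ fun z => (phi_pos z).ne', univ_inter, Real.volume_Iic]
  exact ENNReal.zero_lt_top

lemma hasDerivAt_Phi (x : ℝ) : HasDerivAt Phi (phi x) x := by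
  have hPhi : Phi = fun y => Phi 0 + ∫ t in (0 : ℝ)..y, phi t := by
    funext y
    rw [intervalIntegral.integral_Iic_sub_Iic integrable_phi.integrableOn
      integrable_phi.integrableOn |>.symm]
    simp [Phi_eq_setIntegral_phi]
  rw [hPhi]
  exact (intervalIntegral.integral_hasDerivAt_right integrable_phi.intervalIntegrable
    continuous_phi.stronglyMeasurable.stronglyMeasurableAtFilter
    continuous_phi.continuousAt).const_add _

lemma setIntegral_Ioi_phi_sub (a b : ℝ) : ∫ z in Ioi a, phi (z - b) = Phi (b - a) := by
  have hmap := (measurableEmbedding_subRight b).setIntegral_map (μ := volume) phi (Ioi (a - b))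
  rw [map_sub_right_eq_self, preimage_sub_const_Ioi, sub_add_cancel] at hmap
  rw [← hmap, ← neg_sub, Phi_eq_setIntegral_phi]
  simpa only [phi_neg, neg_neg] using integral_comp_neg_Ioi (-(b - a)) phi

lemma setIntegral_Ioi_phi (a : ℝ) : ∫ z in Ioi a, phi z = Phi (-a) := by
  simpa using setIntegral_Ioi_phi_sub a 0

lemma gaussianPDFReal_zero_one : gaussianPDFReal 0 1 = phi := by
  funext x
  simp [gaussianPDFReal, phi]

lemma integral_gaussianReal_zero_one (f : ℝ → ℝ) :
    ∫ z, f z ∂gaussianReal 0 1 = ∫ z, phi z * f z := by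
  simp [integral_gaussianReal_eq_integral_smul one_ne_zero, gaussianPDFReal_zero_one]

lemma exp_mul_sub_mul_phi (b z : ℝ) : Real.exp (b * z - b ^ 2 / 2) * phi z = phi (z - b) := by
  rw [phi, phi, mul_left_comm, ← Real.exp_add]
  ring_nf

lemma integrable_exp_mul_sub_gaussianReal (b : ℝ) :
    Integrable (fun z => Real.exp (b * z - b ^ 2 / 2)) (gaussianReal 0 1) := by
  simpa only [Real.exp_sub] using (integrable_exp_mul_gaussianReal b).div_const _

lemma integral_exp_mul_sub_gaussianReal (b : ℝ) :
    ∫ z, Real.exp (b * z - b ^ 2 / 2) ∂gaussianReal 0 1 = 1 := by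
  have hmgf := congrFun (mgf_id_gaussianReal (μ := 0) (v := 1)) b
  simp only [mgf, id] at hmgf
  simp only [Real.exp_sub, integral_div, hmgf]
  simp

lemma max_sub_zero_eq_max_sub_zero_sub_add (x K : ℝ) : max (K - x) 0 = max (x - K) 0 - x + K := by
  rcases le_total x K with h | h
  · rw [max_eq_left (by linarith), max_eq_right (by linarith)]; ring
  · rw [max_eq_right (by linarith), max_eq_left (by linarith)]; ring

namespace Black

noncomputable def d₁ (F K b : ℝ) : ℝ := (Real.log (F / K) + b ^ 2 / 2) / b

/-- Black's undiscounted call price for forward `F`, strike `K` and total volatility `b = σ √T`. -/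
noncomputable def call (F K b : ℝ) : ℝ := F * Phi (d₁ F K b) - K * Phi (d₁ F K b - b)

variable {F K b : ℝ}

lemma lt_mul_exp_iff (hF : 0 < F) (hK : 0 < K) (hb : 0 < b) (z : ℝ) :
    K < F * Real.exp (b * z - b ^ 2 / 2) ↔ b - d₁ F K b < z := by
  rw [show F * Real.exp (b * z - b ^ 2 / 2) = Real.exp (Real.log F + (b * z - b ^ 2 / 2)) by
      rw [Real.exp_add, Real.exp_log hF], ← Real.log_lt_iff_lt_exp hK, d₁,
    Real.log_div hF.ne' hK.ne', sub_lt_comm, lt_div_iff₀ hb]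
  constructor <;> intro h <;> linarith

lemma mul_phi_d₁ (hF : 0 < F) (hK : 0 < K) (hb : 0 < b) :
    F * phi (d₁ F K b) = K * phi (d₁ F K b - b) := by
  have hd : d₁ F K b * b = Real.log F - Real.log K + b ^ 2 / 2 := by
    rw [d₁, div_mul_cancel₀ _ hb.ne', Real.log_div hF.ne' hK.ne']
  have hexponent : Real.log F + -d₁ F K b ^ 2 / 2 = Real.log K + -(d₁ F K b - b) ^ 2 / 2 := by
    linear_combination -hd
  simp only [phi]
  calc F * ((Real.sqrt (2 * π))⁻¹ * Real.exp (-d₁ F K b ^ 2 / 2))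
      = (Real.sqrt (2 * π))⁻¹ * Real.exp (Real.log F + -d₁ F K b ^ 2 / 2) := by
        rw [Real.exp_add, Real.exp_log hF]; ring
    _ = (Real.sqrt (2 * π))⁻¹ * Real.exp (Real.log K + -(d₁ F K b - b) ^ 2 / 2) := by
        rw [hexponent]
    _ = K * ((Real.sqrt (2 * π))⁻¹ * Real.exp (-(d₁ F K b - b) ^ 2 / 2)) := by
        rw [Real.exp_add, Real.exp_log hK]; ring

lemma integral_call_payoff (hF : 0 < F) (hK : 0 < K) (hb : 0 < b) :
    ∫ z, max (F * Real.exp (b * z - b ^ 2 / 2) - K) 0 ∂gaussianReal 0 1 = call F K b := by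
  have hpayoff : (fun z => phi z * max (F * Real.exp (b * z - b ^ 2 / 2) - K) 0) =
      (Ioi (b - d₁ F K b)).indicator fun z => F * phi (z - b) - K * phi z := by
    funext z
    by_cases hz : z ∈ Ioi (b - d₁ F K b)
    · rw [indicator_of_mem hz, max_eq_left (sub_nonneg.2 ((lt_mul_exp_iff hF hK hb z).2 hz).le),
        ← exp_mul_sub_mul_phi]
      ring
    · rw [indicator_of_notMem hz, max_eq_right (sub_nonpos.2 (not_lt.1
        (mt (lt_mul_exp_iff hF hK hb z).1 hz))), mul_zero]
  rw [integral_gaussianReal_zero_one, hpayoff, integral_indicator measurableSet_Ioi,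
    integral_sub ((integrable_phi.comp_sub_right b).const_mul F).integrableOn
      (integrable_phi.const_mul K).integrableOn,
    integral_const_mul, integral_const_mul, setIntegral_Ioi_phi_sub, setIntegral_Ioi_phi, call]
  ring_nf

lemma integral_put_payoff (hF : 0 < F) (hK : 0 < K) (hb : 0 < b) :
    ∫ z, max (K - F * Real.exp (b * z - b ^ 2 / 2)) 0 ∂gaussianReal 0 1 = call F K b - F + K := by
  have hX_pos : ∀ z, 0 < F * Real.exp (b * z - b ^ 2 / 2) := fun z => mul_pos hF (Real.exp_pos _)
  have hX : Integrable (fun z => F * Real.exp (b * z - b ^ 2 / 2)) (gaussianReal 0 1) :=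
    (integrable_exp_mul_sub_gaussianReal b).const_mul F
  have hcall : Integrable (fun z => max (F * Real.exp (b * z - b ^ 2 / 2) - K) 0)
      (gaussianReal 0 1) :=
    hX.mono (by fun_prop) (ae_of_all _ fun z => by
      rw [Real.norm_of_nonneg (le_max_right _ _), Real.norm_of_nonneg (hX_pos z).le]
      exact max_le (by linarith) (hX_pos z).le)
  rw [integral_congr_ae (ae_of_all _ fun z =>
    max_sub_zero_eq_max_sub_zero_sub_add (F * Real.exp (b * z - b ^ 2 / 2)) K),
    integral_add (by exact hcall.sub hX) (integrable_const K), integral_sub hcall hX,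
    integral_call_payoff hF hK hb, integral_const_mul, integral_exp_mul_sub_gaussianReal]
  simp

lemma hasDerivAt_call (hF : 0 < F) (hK : 0 < K) (hb : 0 < b) :
    HasDerivAt (fun F => call F K b) (Phi (d₁ F K b)) F := by
  have hd : HasDerivAt (fun F => d₁ F K b) (1 / (F * b)) F := by
    refine ((((hasDerivAt_id' F).div_const K).log (div_pos hF hK).ne').add_const
      (b ^ 2 / 2)).div_const b |>.congr_deriv ?_
    field_simp
  refine (((hasDerivAt_id' F).mul ((hasDerivAt_Phi _).comp F hd)).sub
    (((hasDerivAt_Phi _).comp F (hd.sub_const b)).const_mul K)).congr_deriv ?_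
  simp only [Function.comp_apply]
  field_simp
  linear_combination mul_phi_d₁ hF hK hb

lemma d₁_eq_dBS {S₀ r T σ : ℝ} (hS : 0 < S₀) (hK : 0 < K) (hT : 0 ≤ T) :
    d₁ (S₀ * Real.exp (r * T)) K (σ * Real.sqrt T) = dBS S₀ K r T σ := by
  rw [d₁, dBS, mul_div_right_comm, Real.log_mul (div_pos hS hK).ne' (Real.exp_pos _).ne',
    Real.log_exp, mul_pow, Real.sq_sqrt hT]
  ring_nf

end Black

theorem stmt9_general (S₀ Kp Kc σ T r μp μc : ℝ) (hS : 0 < S₀) (hKp : 0 < Kp) (hKc : 0 < Kc)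
    (hσ : 0 < σ) (hT : 0 < T) (hμp : 0 < μp)
    (R : ℝ → ℝ)
    (hR : ∀ y : ℝ, R y =
      μp * (∫ z, max (Kp - y *
              (S₀ * Real.exp (r * T - σ ^ 2 * T / 2 + σ * Real.sqrt T * z))) 0
            ∂(gaussianReal 0 1)) +
      μc * (∫ z, max (y *
              (S₀ * Real.exp (r * T - σ ^ 2 * T / 2 + σ * Real.sqrt T * z)) - Kc) 0
            ∂(gaussianReal 0 1))) :
    HasDerivAt R
        (Real.exp (r * T) * S₀ *
          (μp * (Phi (dBS S₀ Kp r T σ) - 1) + μc * Phi (dBS S₀ Kc r T σ))) 1 ∧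
      (Real.exp (r * T) * S₀ *
            (μp * (Phi (dBS S₀ Kp r T σ) - 1) + μc * Phi (dBS S₀ Kc r T σ)) = 0 ↔
        μc / μp = (1 - Phi (dBS S₀ Kp r T σ)) / Phi (dBS S₀ Kc r T σ)) := by
  set F := S₀ * Real.exp (r * T) with hF_def
  set b := σ * Real.sqrt T with hb_def
  have hF : 0 < F := by positivity
  have hb : 0 < b := mul_pos hσ (Real.sqrt_pos.2 hT)
  have hb_sq : b ^ 2 = σ ^ 2 * T := by rw [hb_def, mul_pow, Real.sq_sqrt hT.le]
  have hlognormal : ∀ y z, y * (S₀ * Real.exp (r * T - σ ^ 2 * T / 2 + b * z)) =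
      y * F * Real.exp (b * z - b ^ 2 / 2) := fun y z => by
    rw [hb_sq, hF_def, show r * T - σ ^ 2 * T / 2 + b * z = r * T + (b * z - σ ^ 2 * T / 2) by ring,
      Real.exp_add]
    ring
  have hR_eq : R =ᶠ[𝓝 1] fun y =>
      μp * (Black.call (y * F) Kp b - y * F + Kp) + μc * Black.call (y * F) Kc b := by
    filter_upwards [eventually_gt_nhds one_pos] with y hy
    simp only [hR, hlognormal]
    rw [Black.integral_put_payoff (mul_pos hy hF) hKp hb,
      Black.integral_call_payoff (mul_pos hy hF) hKc hb]
  have hcall : ∀ K, 0 < K →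
      HasDerivAt (fun y => Black.call (y * F) K b) (Phi (dBS S₀ K r T σ) * F) 1 := fun K hK => by
    rw [← Black.d₁_eq_dBS hS hK hT.le]
    exact (Black.hasDerivAt_call hF hK hb).comp_of_eq 1 (hasDerivAt_mul_const F) (one_mul F).symm
  refine ⟨((((hcall Kp hKp).sub (hasDerivAt_mul_const F)).add_const Kp).const_mul μp |>.add
    ((hcall Kc hKc).const_mul μc)).congr_of_eventuallyEq hR_eq |>.congr_deriv (by ring), ?_⟩
  rw [mul_eq_zero, or_iff_right (by positivity),
    div_eq_div_iff hμp.ne' (Phi_pos _).ne']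
  constructor <;> intro h <;> linarith

theorem stmt9 (S₀ Kp Kc σ T r μp μc : ℝ) (hS : 0 < S₀) (hKp : 0 < Kp) (hKc : 0 < Kc)
    (hσ : 0 < σ) (hT : 0 < T) (hr : 0 ≤ r) (hμp : 0 < μp) (hμc : 0 < μc)
    (R : ℝ → ℝ)
    (hR : ∀ y : ℝ, R y =
      μp * (∫ z, max (Kp - y *
              (S₀ * Real.exp (r * T - σ ^ 2 * T / 2 + σ * Real.sqrt T * z))) 0
            ∂(gaussianReal 0 1)) +
      μc * (∫ z, max (y *
              (S₀ * Real.exp (r * T - σ ^ 2 * T / 2 + σ * Real.sqrt T * z)) - Kc) 0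
            ∂(gaussianReal 0 1))) :
    HasDerivAt R
        (Real.exp (r * T) * S₀ *
          (μp * (Phi (dBS S₀ Kp r T σ) - 1) + μc * Phi (dBS S₀ Kc r T σ))) 1 ∧
      (Real.exp (r * T) * S₀ *
            (μp * (Phi (dBS S₀ Kp r T σ) - 1) + μc * Phi (dBS S₀ Kc r T σ)) = 0 ↔
        μc / μp = (1 - Phi (dBS S₀ Kp r T σ)) / Phi (dBS S₀ Kc r T σ)) :=
  stmt9_general S₀ Kp Kc σ T r μp μc hS hKp hKc hσ hT hμp R hR
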